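/- arXiv:2101.01435 — 3 statements merged into one kernel-verified Lean document; each statement's English description precedes it below -/
import Mathlib

section
/- In a decisive electorate (where every voter's indifference set is empty), a committee W satisfies Weak Trichotomous Proportional Justified Representation if and only if W satisfies Proportional Justified Representation with respect to the induced dichotomous profile (where each voter's approval set is her trichotomous approval set). -/
open Finset

variable {C : Type*} [Fintype C] [DecidableEq C]

/-- Proportional Justified Representation for a dichotomous profile `A`. -/
def PJR (n k : ℕ) (A : Fin n → Finset C) (W : Finset C) : Prop :=
  ∀ ℓ ∈ Finset.Icc 1 k, ∀ V' : Finset (Fin n), V'.Nonempty →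
    ((ℓ : ℚ) * n / k ≤ V'.card) → ℓ ≤ (V'.inf A).card →
    ℓ ≤ ((V'.sup A) ∩ W).card

/-- Justified Representation for a dichotomous profile `A`. -/
def JR (n k : ℕ) (A : Fin n → Finset C) (W : Finset C) : Prop :=
  ¬ ∃ V' : Finset (Fin n), V'.Nonempty ∧ ((n : ℚ) / k ≤ V'.card) ∧
    (V'.inf A).Nonempty ∧ (V'.sup A) ∩ W = ∅

/-- Strong Preliminary Representation. -/
def SPR (n k : ℕ) (Ap Am : Fin n → Finset C) (W : Finset C) : Prop :=
  ∀ V' : Finset (Fin n), V'.Nonempty → ((n : ℚ) / k ≤ V'.card) →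
    ((V'.sup Ap) \ (V'.sup Am)).Nonempty →
    ∃ i ∈ V', 1 ≤ (W ∩ Ap i).card ∧ W ∩ (V'.inf Am) = ∅

/-- Weak Trichotomous Justified Representation. -/
def WTJR (n k : ℕ) (Ap Am : Fin n → Finset C) (W : Finset C) : Prop :=
  ∀ V' : Finset (Fin n), V'.Nonempty → ((n : ℚ) / k ≤ V'.card) →
    1 ≤ ((V'.sup Ap) \ (V'.sup Am)).card →
    1 ≤ ((V'.sup Ap) ∩ W).card

/-- Weak Trichotomous Proportional Justified Representation. -/
def WTPJR (n k : ℕ) (Ap Am : Fin n → Finset C) (W : Finset C) : Prop :=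
  ∀ ℓ ∈ Finset.Icc 1 k, ∀ V' : Finset (Fin n), V'.Nonempty →
    ((ℓ : ℚ) * n / k ≤ V'.card) →
    ℓ ≤ ((V'.sup Ap) \ (V'.sup Am)).card →
    ℓ ≤ ((V'.sup Ap) ∩ W).card

/-- The indifference set of voter `i`. -/
def indiff {n : ℕ} (Ap Am : Fin n → Finset C) (i : Fin n) : Finset C :=
  (Ap i ∪ Am i)ᶜ

/-- Weak Ambivalent Representation. -/
def WAR (n k : ℕ) (Ap Am : Fin n → Finset C) (W : Finset C) : Prop :=
  ∀ ℓ ∈ Finset.Icc 1 k, ∀ V' : Finset (Fin n), V'.Nonempty →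
    ((ℓ : ℚ) * n / k ≤ V'.card) →
    ℓ ≤ ((V'.sup Ap) \ (V'.sup Am)).card →
    ℓ ≤ (((V'.sup Ap) ∪ (V'.inf (indiff Ap Am))) ∩ W).card

/-- The Weakest Axiom. -/
def WA (n k : ℕ) (Ap Am : Fin n → Finset C) (W : Finset C) : Prop :=
  ∀ ℓ ∈ Finset.Icc 1 k, ∀ V' : Finset (Fin n), V'.Nonempty →
    ((ℓ : ℚ) * n / k ≤ V'.card) →
    ℓ ≤ ((V'.sup Ap) \ (V'.sup Am)).card →
    ℓ ≤ (((V'.sup Ap) ∪ (V'.sup (indiff Ap Am))) ∩ W).card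

/-- New Cohesiveness Representation. -/
def NCR (n k : ℕ) (Ap : Fin n → Finset C) (W : Finset C) : Prop :=
  ∀ ℓ ∈ Finset.Icc 1 k, ∀ V' : Finset (Fin n), V'.Nonempty →
    ((ℓ : ℚ) * n / k ≤ V'.card) → ℓ ≤ (V'.inf Ap).card →
    ℓ ≤ ((V'.inf Ap) ∩ W).card

/-- Weaker New Cohesiveness Representation. -/
def WNCR (n k : ℕ) (Ap : Fin n → Finset C) (W : Finset C) : Prop :=
  ∀ ℓ ∈ Finset.Icc 1 k, ∀ V' : Finset (Fin n), V'.Nonempty →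
    ((ℓ : ℚ) * n / k ≤ V'.card) → ℓ ≤ (V'.inf Ap).card →
    ℓ ≤ ((V'.sup Ap) ∩ W).card

/-- In a decisive electorate, WTPJR ↔ PJR for the induced dichotomous profile. -/
theorem stmt0 {n k : ℕ} (Ap Am : Fin n → Finset C)
    (hdisj : ∀ i, Disjoint (Ap i) (Am i))
    (hdec : ∀ i, Ap i ∪ Am i = Finset.univ)
    (W : Finset C) (hW : W.card = k) :
    WTPJR n k Ap Am W ↔ PJR n k Ap W := by
  have key : ∀ V' : Finset (Fin n), V'.Nonempty →
      (V'.sup Ap) \ (V'.sup Am) = V'.inf Ap := by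
    intro V' hV'
    ext x
    simp only [Finset.mem_sdiff, Finset.mem_sup, not_exists, not_and]
    have hAm : ∀ i, x ∈ Am i ↔ x ∉ Ap i := by
      intro i
      constructor
      · intro hm hp
        exact absurd (Finset.mem_inter.mpr ⟨hp, hm⟩) (by rw [Finset.disjoint_iff_inter_eq_empty.mp (hdisj i)]; simp)
      · intro hp
        have := hdec i
        have hx : x ∈ Ap i ∪ Am i := by rw [this]; exact Finset.mem_univ x
        rcases Finset.mem_union.mp hx with h | h
        · exact absurd h hp
        · exact h
    constructor
    · rintro ⟨⟨i, hi, hxi⟩, hno⟩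
      rw [Finset.mem_inf]
      intro j hj
      by_contra hxj
      exact hno j hj ((hAm j).mpr hxj)
    · intro hx
      rw [Finset.mem_inf] at hx
      obtain ⟨i, hi⟩ := hV'
      exact ⟨⟨i, hi, hx i hi⟩, fun j hj hm => (hAm j).mp hm (hx j hj)⟩
  constructor
  · intro h ℓ hℓ V' hV' hcard hinf
    exact h ℓ hℓ V' hV' hcard (by rw [key V' hV']; exact hinf)
  · intro h ℓ hℓ V' hV' hcard hdiff
    exact h ℓ hℓ V' hV' hcard (by rw [← key V' hV']; exact hdiff)
end

section
/- There exists a trichotomous profile (with 2 voters, 2 candidates, and committee size k = 2) for which no committee of size k satisfies Strong Preliminary Representation. -/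
open Finset

variable {C : Type*} [Fintype C] [DecidableEq C]

/-- A profile with 2 voters, 2 candidates, k = 2 with no SPR committee. -/
theorem stmt2 : ∃ Ap Am : Fin 2 → Finset (Fin 2),
    (∀ i, Disjoint (Ap i) (Am i)) ∧
    ∀ W : Finset (Fin 2), W.card = 2 → ¬ SPR 2 2 Ap Am W := by
  refine ⟨fun _ => {0}, fun _ => {1}, by decide, ?_⟩
  intro W hW hSPR
  have hWuniv : W = Finset.univ := Finset.eq_univ_of_card W (by simp [hW])
  have := hSPR Finset.univ ⟨0, Finset.mem_univ 0⟩ (by norm_num) (by decide)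
  obtain ⟨i, _, _, hemp⟩ := this
  rw [hWuniv] at hemp
  revert hemp; decide
end

section
/- There exists a trichotomous profile (5 voters, 3 candidates, k = 2) for which no committee of size 2 satisfies Weak Ambivalent Representation. -/
open Finset

variable {C : Type*} [Fintype C] [DecidableEq C]

/-- A profile with 5 voters, 3 candidates, k = 2 with no WAR committee. -/
theorem stmt4 : ∃ Ap Am : Fin 5 → Finset (Fin 3),
    (∀ i, Disjoint (Ap i) (Am i)) ∧
    ∀ W : Finset (Fin 3), W.card = 2 → ¬ WAR 5 2 Ap Am W := by
  refine ⟨![∅, ∅, {0}, {1}, {2}], ![∅, ∅, {1,2}, {0,2}, {0,1}], ?_, ?_⟩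
  · intro i; fin_cases i <;> decide
  · intro W hW h
    have key : ∀ x : Fin 3, x ∈ W := by
      intro x
      fin_cases x
      · have hx := h 1 (by decide) ({0, 1, 2} : Finset (Fin 5)) ⟨0, by decide⟩
          (by norm_num [show (({0,1,2} : Finset (Fin 5)).card = 3) from by decide])
          (by decide)
        rw [show (({0,1,2} : Finset (Fin 5)).sup ![∅, ∅, {0}, {1}, {2}] ∪
            ({0,1,2} : Finset (Fin 5)).inf
              (indiff ![∅, ∅, {0}, {1}, {2}] ![∅, ∅, {1,2}, {0,2}, {0,1}])) =
            ({0} : Finset (Fin 3)) from by decide] at hx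
        obtain ⟨y, hy⟩ := Finset.card_pos.mp hx
        simp only [Finset.mem_inter, Finset.mem_singleton] at hy
        show (0 : Fin 3) ∈ W
        exact hy.1 ▸ hy.2
      · have hx := h 1 (by decide) ({0, 1, 3} : Finset (Fin 5)) ⟨0, by decide⟩
          (by norm_num [show (({0,1,3} : Finset (Fin 5)).card = 3) from by decide])
          (by decide)
        rw [show (({0,1,3} : Finset (Fin 5)).sup ![∅, ∅, {0}, {1}, {2}] ∪
            ({0,1,3} : Finset (Fin 5)).inf
              (indiff ![∅, ∅, {0}, {1}, {2}] ![∅, ∅, {1,2}, {0,2}, {0,1}])) =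
            ({1} : Finset (Fin 3)) from by decide] at hx
        obtain ⟨y, hy⟩ := Finset.card_pos.mp hx
        simp only [Finset.mem_inter, Finset.mem_singleton] at hy
        show (1 : Fin 3) ∈ W
        exact hy.1 ▸ hy.2
      · have hx := h 1 (by decide) ({0, 1, 4} : Finset (Fin 5)) ⟨0, by decide⟩
          (by norm_num [show (({0,1,4} : Finset (Fin 5)).card = 3) from by decide])
          (by decide)
        rw [show (({0,1,4} : Finset (Fin 5)).sup ![∅, ∅, {0}, {1}, {2}] ∪
            ({0,1,4} : Finset (Fin 5)).inf
              (indiff ![∅, ∅, {0}, {1}, {2}] ![∅, ∅, {1,2}, {0,2}, {0,1}])) =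
            ({2} : Finset (Fin 3)) from by decide] at hx
        obtain ⟨y, hy⟩ := Finset.card_pos.mp hx
        simp only [Finset.mem_inter, Finset.mem_singleton] at hy
        show (2 : Fin 3) ∈ W
        exact hy.1 ▸ hy.2
    have : (Finset.univ : Finset (Fin 3)) ⊆ W := fun x _ => key x
    have := Finset.card_le_card this
    simp [hW] at this
end
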